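/- Let k ≤ n be natural numbers, let G be a k×n matrix over F₂ = ZMod 2 of rank k, let Q be an invertible n×n matrix over F₂ (the generator matrix of a polar code, possibly multi-kernel), and let P be an n×n permutation matrix over F₂. Then there exist an invertible k×k matrix E over F₂ and a k×n matrix M over F₂ in upper-trapezoidal (row-echelon) form such that G = E⁻¹ * M * Q * P; consequently the code {m * G : m ∈ F₂^k} equals {c * P : c ∈ C_p}, where C_p = {m' * M * Q : m' ∈ F₂^k} is a polar code with dynamic frozen bits determined by M. -/

import Mathlib

/-!
Since `Q * P` is invertible, `G * (Q * P)⁻¹` still has `k` independent rows, and Gaussian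
elimination brings it into upper-trapezoidal form `M = E * G * (Q * P)⁻¹` with `E` invertible.
The elimination runs over the columns: a zero first column is dropped; otherwise an invertible
row operation turns it into `e₀`, and the `diag(1, E')` reducing the lower-right block finishes
the job. The two codes agree because `m ↦ m ᵥ* E⁻¹` is a bijection of `F₂ᵏ`.
-/

open Matrix

/-- A permutation matrix. -/
def IsPermMatrix {n : ℕ} (P : Matrix (Fin n) (Fin n) (ZMod 2)) : Prop :=
  ∃ σ : Equiv.Perm (Fin n), ∀ i j, P i j = if σ i = j then 1 else 0

/-- Upper-trapezoidal (row-echelon) form. -/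
def IsUpperTrapezoidal {k n : ℕ} (M : Matrix (Fin k) (Fin n) (ZMod 2)) : Prop :=
  ∃ p : Fin k → Fin n, StrictMono p ∧ (∀ i, M i (p i) = 1) ∧
    ∀ i j, j < p i → M i j = 0

theorem Equiv.Perm.isUnit_permMatrix {R n : Type*} [CommRing R] [Fintype n] [DecidableEq n]
    (σ : Equiv.Perm n) : IsUnit (σ.permMatrix R) := by
  rw [isUnit_iff_isUnit_det, det_permutation]
  exact (Equiv.Perm.sign σ).isUnit.map (Int.castRingHom R)

theorem IsPermMatrix.isUnit {n : ℕ} {P : Matrix (Fin n) (Fin n) (ZMod 2)} (hP : IsPermMatrix P) :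
    IsUnit P := by
  obtain ⟨σ, hσ⟩ := hP
  have hPσ : P = σ.permMatrix (ZMod 2) := by
    ext i j
    simp [hσ, Equiv.toPEquiv_apply, PEquiv.toMatrix_apply]
  exact hPσ ▸ σ.isUnit_permMatrix

namespace Matrix

theorem linearIndependent_row_of_rank_eq_card {K m n : Type*} [Field K] [Fintype m] [Fintype n]
    {A : Matrix m n K} (h : A.rank = Fintype.card m) : LinearIndependent K A.row := by
  rw [linearIndependent_iff_card_eq_finrank_span, ← h, rank_eq_finrank_span_row, Set.finrank]

section LinearIndependent

variable {R m : Type*} [CommRing R] [Fintype m] {n : ℕ}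

theorem linearIndependent_row_isUnit_mul [DecidableEq m] {o : Type*} {A : Matrix m o R}
    {U : Matrix m m R} (hU : IsUnit U) (hA : LinearIndependent R A.row) :
    LinearIndependent R (U * A).row := by
  rw [← vecMul_injective_iff] at hA ⊢
  intro c c' h
  simp only [← vecMul_vecMul] at h
  exact vecMul_injective_of_isUnit hU (hA h)

theorem linearIndependent_row_submatrix_succ_of_col_zero_eq_zero
    {A : Matrix m (Fin (n + 1)) R} (h0 : A.col 0 = 0) (hA : LinearIndependent R A.row) :
    LinearIndependent R (A.submatrix id Fin.succ).row := by
  rw [← vecMul_injective_iff] at hA ⊢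
  intro c c' h
  apply hA
  ext j
  cases j using Fin.cases with
  | zero => simp [vecMul, ← col_apply, h0]
  | succ j => exact congrFun h j

theorem linearIndependent_row_submatrix_succ_succ_of_col_zero_eq_single {k : ℕ}
    {A : Matrix (Fin (k + 1)) (Fin (n + 1)) R} (h0 : A.col 0 = Pi.single 0 1)
    (hA : LinearIndependent R A.row) :
    LinearIndependent R (A.submatrix Fin.succ Fin.succ).row := by
  rw [← vecMul_injective_iff] at hA ⊢
  intro c c' h
  suffices vecCons 0 c = vecCons 0 c' from Fin.cons_right_injective 0 this
  apply hA
  ext j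
  cases j using Fin.cases with
  | zero => simp [vecMul, ← col_apply, h0]
  | succ j => simpa [vecMul, dotProduct, Fin.sum_univ_succ] using congrFun h j

end LinearIndependent

theorem exists_isUnit_mulVec_eq_single {K m : Type*} [Field K] [Fintype m] [DecidableEq m]
    {v : m → K} (hv : v ≠ 0) (i : m) :
    ∃ U : Matrix m m K, IsUnit U ∧ U *ᵥ v = Pi.single i 1 := by
  obtain ⟨j, hj⟩ := Function.ne_iff.mp hv
  -- `B` sends `e_j` to `v`, and Cramer's rule for `1` gives `det B = v j`.
  set B := (1 : Matrix m m K).updateCol j v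
  have hB : IsUnit B.det := by
    rw [← cramer_apply, cramer_one]
    exact hj.isUnit
  have hBv : B⁻¹ *ᵥ v = Pi.single j 1 := by
    have : v = B *ᵥ Pi.single j 1 := by ext; simp [B]
    rw [this, mulVec_mulVec, nonsing_inv_mul B hB, one_mulVec]
  have hBinv : IsUnit B⁻¹ := isUnit_nonsing_inv_iff.mpr ((isUnit_iff_isUnit_det B).mpr hB)
  refine ⟨(Equiv.swap i j).permMatrix K * B⁻¹, (Equiv.swap i j).isUnit_permMatrix.mul hBinv, ?_⟩
  rw [← mulVec_mulVec, hBv, permMatrix_mulVec]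
  ext a
  simp [Pi.single_apply, Equiv.swap_apply_eq_iff]

section ExtendByOne

variable {R : Type*} {k : ℕ}

def extendByOne [Zero R] [One R] (E : Matrix (Fin k) (Fin k) R) :
    Matrix (Fin (k + 1)) (Fin (k + 1)) R :=
  of (Fin.cons (Pi.single 0 1) fun i => Fin.cons 0 (E i))

variable (E : Matrix (Fin k) (Fin k) R)

@[simp]
theorem extendByOne_mul_apply_succ [Semiring R] {o : Type*} (X : Matrix (Fin (k + 1)) o R)
    (i : Fin k) :
    (extendByOne E * X) i.succ = (E * X.submatrix Fin.succ id) i := by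
  ext j
  simp [extendByOne, mul_apply, Fin.sum_univ_succ]

@[simp]
theorem det_extendByOne [CommRing R] : (extendByOne E).det = E.det := by
  have hE : (extendByOne E).submatrix Fin.succ Fin.succ = E := rfl
  rw [det_succ_row_zero, Fin.sum_univ_succ, Fin.succAbove_zero, hE]
  simp [extendByOne]

theorem isUnit_extendByOne [CommRing R] {E : Matrix (Fin k) (Fin k) R} (hE : IsUnit E) :
    IsUnit (extendByOne E) := by
  rw [isUnit_iff_isUnit_det, det_extendByOne]
  exact (isUnit_iff_isUnit_det E).mp hE

end ExtendByOne

end Matrix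

namespace IsUpperTrapezoidal

variable {k n : ℕ}

theorem of_isEmpty (M : Matrix (Fin 0) (Fin n) (ZMod 2)) : IsUpperTrapezoidal M :=
  ⟨Fin.elim0, fun i => i.elim0, fun i => i.elim0, fun i => i.elim0⟩

theorem of_col_zero_eq_zero {M : Matrix (Fin k) (Fin (n + 1)) (ZMod 2)} (h0 : M.col 0 = 0)
    (h : IsUpperTrapezoidal (M.submatrix id Fin.succ)) : IsUpperTrapezoidal M := by
  obtain ⟨p, hp, hpiv, hzero⟩ := h
  refine ⟨Fin.succ ∘ p, Fin.strictMono_succ.comp hp, hpiv, fun i j hj => ?_⟩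
  cases j using Fin.cases with
  | zero => exact congrFun h0 i
  | succ j => exact hzero i j (Fin.succ_lt_succ_iff.mp hj)

theorem of_col_zero_eq_single {M : Matrix (Fin (k + 1)) (Fin (n + 1)) (ZMod 2)}
    (h0 : M.col 0 = Pi.single 0 1)
    (h : IsUpperTrapezoidal (M.submatrix Fin.succ Fin.succ)) : IsUpperTrapezoidal M := by
  obtain ⟨p, hp, hpiv, hzero⟩ := h
  refine ⟨Fin.cons 0 (Fin.succ ∘ p),
    Fin.strictMono_cons.mpr ⟨fun j => Fin.succ_pos _, Fin.strictMono_succ.comp hp⟩,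
    fun i => ?_, fun i j hj => ?_⟩
  · cases i using Fin.cases with
    | zero => simpa using congrFun h0 0
    | succ i => exact hpiv i
  · cases i using Fin.cases with
    | zero => exact absurd hj (Fin.not_lt_zero j)
    | succ i =>
      cases j using Fin.cases with
      | zero => simpa using congrFun h0 i.succ
      | succ j => exact hzero i j (Fin.succ_lt_succ_iff.mp hj)

end IsUpperTrapezoidal

def HasUpperTrapezoidalForm {k n : ℕ} (A : Matrix (Fin k) (Fin n) (ZMod 2)) : Prop :=
  ∃ E : Matrix (Fin k) (Fin k) (ZMod 2), IsUnit E ∧ IsUpperTrapezoidal (E * A)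

namespace HasUpperTrapezoidalForm

variable {k n : ℕ}

theorem of_isUnit_mul {A : Matrix (Fin k) (Fin n) (ZMod 2)} {U : Matrix (Fin k) (Fin k) (ZMod 2)}
    (hU : IsUnit U) (h : HasUpperTrapezoidalForm (U * A)) : HasUpperTrapezoidalForm A := by
  obtain ⟨E, hE, hEUA⟩ := h
  exact ⟨E * U, hE.mul hU, by rwa [Matrix.mul_assoc]⟩

theorem of_col_zero_eq_zero {A : Matrix (Fin k) (Fin (n + 1)) (ZMod 2)} (h0 : A.col 0 = 0)
    (h : HasUpperTrapezoidalForm (A.submatrix id Fin.succ)) : HasUpperTrapezoidalForm A := by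
  obtain ⟨E, hE, hEA⟩ := h
  refine ⟨E, hE, .of_col_zero_eq_zero ?_ ?_⟩
  · change E *ᵥ A.col 0 = 0
    rw [h0, mulVec_zero]
  · rwa [submatrix_mul _ _ _ id _ Function.bijective_id, submatrix_id_id]

theorem of_col_zero_eq_single {A : Matrix (Fin (k + 1)) (Fin (n + 1)) (ZMod 2)}
    (h0 : A.col 0 = Pi.single 0 1)
    (h : HasUpperTrapezoidalForm (A.submatrix Fin.succ Fin.succ)) : HasUpperTrapezoidalForm A := by
  obtain ⟨E, hE, hEA⟩ := h
  refine ⟨extendByOne E, isUnit_extendByOne hE, .of_col_zero_eq_single ?_ ?_⟩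
  · change extendByOne E *ᵥ A.col 0 = _
    rw [h0, mulVec_single_one]
    ext i
    cases i using Fin.cases <;> simp [extendByOne]
  · convert hEA using 1
    ext i j
    rw [submatrix_apply, extendByOne_mul_apply_succ]
    simp [mul_apply]

end HasUpperTrapezoidalForm

theorem hasUpperTrapezoidalForm_of_linearIndependent :
    ∀ {k n : ℕ} {A : Matrix (Fin k) (Fin n) (ZMod 2)}, LinearIndependent (ZMod 2) A.row →
      HasUpperTrapezoidalForm A
  | 0, _, A, _ => ⟨1, isUnit_one, .of_isEmpty _⟩
  | _ + 1, 0, _, hA => absurd (Subsingleton.elim _ _) (hA.ne_zero 0)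
  | _ + 1, _ + 1, A, hA => by
    by_cases hcol : A.col 0 = 0
    · exact .of_col_zero_eq_zero hcol <| hasUpperTrapezoidalForm_of_linearIndependent <|
        linearIndependent_row_submatrix_succ_of_col_zero_eq_zero hcol hA
    · obtain ⟨U, hU, hUA⟩ := exists_isUnit_mulVec_eq_single hcol 0
      have hUA' : (U * A).col 0 = Pi.single 0 1 := hUA
      exact .of_isUnit_mul hU <| .of_col_zero_eq_single hUA' <|
        hasUpperTrapezoidalForm_of_linearIndependent <|
        linearIndependent_row_submatrix_succ_succ_of_col_zero_eq_single hUA' <|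
        linearIndependent_row_isUnit_mul hU hA

theorem blbc_transform_polar_general {k n : ℕ}
    (G : Matrix (Fin k) (Fin n) (ZMod 2)) (hG : G.rank = k)
    (Q : Matrix (Fin n) (Fin n) (ZMod 2)) (hQ : IsUnit Q)
    (P : Matrix (Fin n) (Fin n) (ZMod 2)) (hP : IsPermMatrix P) :
    ∃ (E : Matrix (Fin k) (Fin k) (ZMod 2)) (M : Matrix (Fin k) (Fin n) (ZMod 2)),
      IsUnit E ∧ IsUpperTrapezoidal M ∧
      G = E⁻¹ * (M * (Q * P)) ∧
      {c : Fin n → ZMod 2 | ∃ m : Fin k → ZMod 2, c = m ᵥ* G} =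
        {c : Fin n → ZMod 2 |
          ∃ cp ∈ {cp : Fin n → ZMod 2 | ∃ m' : Fin k → ZMod 2, cp = m' ᵥ* (M * Q)},
            c = cp ᵥ* P} := by
  have hQP : IsUnit (Q * P).det := (isUnit_iff_isUnit_det _).mp (hQ.mul hP.isUnit)
  have hA : LinearIndependent (ZMod 2) (G * (Q * P)⁻¹).row := by
    apply linearIndependent_row_of_rank_eq_card
    rw [rank_mul_eq_left_of_isUnit_det _ _ (isUnit_nonsing_inv_det _ hQP), hG, Fintype.card_fin]
  obtain ⟨E, hE, hM⟩ := hasUpperTrapezoidalForm_of_linearIndependent hA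
  have hEdet : IsUnit E.det := (isUnit_iff_isUnit_det E).mp hE
  set M := E * (G * (Q * P)⁻¹) with hMdef
  have hGM : G = E⁻¹ * (M * (Q * P)) := by
    rw [hMdef, Matrix.mul_assoc E, nonsing_inv_mul_cancel_left _ _ hEdet,
      nonsing_inv_mul_cancel_right _ _ hQP]
  have hcode (m : Fin k → ZMod 2) : m ᵥ* G = m ᵥ* E⁻¹ ᵥ* (M * Q) ᵥ* P := by
    rw [hGM]
    simp only [vecMul_vecMul, Matrix.mul_assoc]
  refine ⟨E, M, hE, hM, hGM, Set.ext fun c => ⟨?_, ?_⟩⟩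
  · rintro ⟨m, rfl⟩
    exact ⟨_, ⟨m ᵥ* E⁻¹, rfl⟩, hcode m⟩
  · rintro ⟨_, ⟨m, rfl⟩, rfl⟩
    exact ⟨m ᵥ* E, by rw [hcode, vecMul_vecMul m E, mul_nonsing_inv _ hEdet, vecMul_one]⟩

/-- Any `(n,k)`-binary linear block code can be transformed into a (possibly multi-kernel)
polar code with dynamic frozen bits. -/
theorem blbc_transform_polar {k n : ℕ} (hkn : k ≤ n)
    (G : Matrix (Fin k) (Fin n) (ZMod 2)) (hG : G.rank = k)
    (Q : Matrix (Fin n) (Fin n) (ZMod 2)) (hQ : IsUnit Q)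
    (P : Matrix (Fin n) (Fin n) (ZMod 2)) (hP : IsPermMatrix P) :
    ∃ (E : Matrix (Fin k) (Fin k) (ZMod 2)) (M : Matrix (Fin k) (Fin n) (ZMod 2)),
      IsUnit E ∧ IsUpperTrapezoidal M ∧
      G = E⁻¹ * (M * (Q * P)) ∧
      {c : Fin n → ZMod 2 | ∃ m : Fin k → ZMod 2, c = m ᵥ* G} =
        {c : Fin n → ZMod 2 |
          ∃ cp ∈ {cp : Fin n → ZMod 2 | ∃ m' : Fin k → ZMod 2, cp = m' ᵥ* (M * Q)},
            c = cp ᵥ* P} :=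
  blbc_transform_polar_general G hG Q hQ P hP
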